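/- Let D be a finite derivation tree whose nodes are labeled by sequents of the form (x⃗)M (a term M with an abstraction prefix x⃗), built from rules: an axiom (0-ary) producing prefix of positive length; a rule λ whose premise's prefix is one longer than its conclusion's prefix; a rule @ with two premises whose prefixes equal the conclusion's prefix; a rule del whose premise's prefix is one shorter than its conclusion's prefix; and a rule FIX whose single premise equals its conclusion and whose immediate subderivation has depth ≥ 1 (i.e., FIX is never applied directly to an axiom or assumption leaf). Then for every instance ι of FIX in D and every thread (path along the tree) from ι upwards to a leaf that is a marked assumption carrying the same sequent (same prefix length) as the conclusion of ι, the thread passes through at least one instance of λ or @. -/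

import Mathlib

/-- Rule tags of the derivation system. -/
inductive Rule : Type
  | axm | lam | app | del | fix | assum
deriving DecidableEq

/-- Abstract derivation trees indexed by the abstraction-prefix length of the
conclusion sequent: an axiom with prefix of positive length, a λ-rule whose
premise's prefix is one longer, an @-rule with two premises of equal prefix,
a del-rule whose premise's prefix is one shorter, a FIX rule whose premise
equals its conclusion, and (marked) assumption leaves. -/
inductive DTree0 : ℕ → Type
  | axm (n : ℕ) (h : 0 < n) : DTree0 n
  | assum (n : ℕ) : DTree0 n
  | lam (n : ℕ) (D : DTree0 (n + 1)) : DTree0 n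
  | app (n : ℕ) (D0 D1 : DTree0 n) : DTree0 n
  | del (n : ℕ) (D : DTree0 n) : DTree0 (n + 1)
  | fix (n : ℕ) (D : DTree0 n) : DTree0 n

namespace DTree0

/-- Depth: length of the longest path of rule instances. -/
def depth : ∀ {n}, DTree0 n → ℕ
  | _, .axm _ _ => 0
  | _, .assum _ => 0
  | _, .lam _ D => D.depth + 1
  | _, .app _ D0 D1 => max D0.depth D1.depth + 1
  | _, .del _ D => D.depth + 1
  | _, .fix _ D => D.depth + 1

/-- The FIX side-condition: every FIX instance in the tree has an immediate
subderivation of depth at least 1 (FIX is never applied directly to an axiom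
or assumption leaf). -/
def SC : ∀ {n}, DTree0 n → Prop
  | _, .axm _ _ => True
  | _, .assum _ => True
  | _, .lam _ D => D.SC
  | _, .app _ D0 D1 => D0.SC ∧ D1.SC
  | _, .del _ D => D.SC
  | _, .fix _ D => D.SC ∧ 1 ≤ D.depth

/-- `ThreadTo D rs m` : there is a thread (path along the tree) from the root
of `D` up to a marked assumption leaf with prefix length `m`, passing through
the rule instances recorded in `rs`. -/
inductive ThreadTo : ∀ {n : ℕ}, DTree0 n → List Rule → ℕ → Prop
  | assum {n} : ThreadTo (DTree0.assum n) [] n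
  | lam {n m rs} {D : DTree0 (n + 1)} :
      ThreadTo D rs m → ThreadTo (DTree0.lam n D) (Rule.lam :: rs) m
  | appL {n m rs} {D0 D1 : DTree0 n} :
      ThreadTo D0 rs m → ThreadTo (DTree0.app n D0 D1) (Rule.app :: rs) m
  | appR {n m rs} {D0 D1 : DTree0 n} :
      ThreadTo D1 rs m → ThreadTo (DTree0.app n D0 D1) (Rule.app :: rs) m
  | del {n m rs} {D : DTree0 n} :
      ThreadTo D rs m → ThreadTo (DTree0.del n D) (Rule.del :: rs) m
  | fix {n m rs} {D : DTree0 n} :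
      ThreadTo D rs m → ThreadTo (DTree0.fix n D) (Rule.fix :: rs) m

end DTree0

/-! Along a thread without λ or @ the prefix length drops by one at each del and is kept at each
FIX, so a thread returning to the prefix length of its root consists of FIX instances only. Such a
thread ends in a FIX applied directly to an assumption leaf, which the side condition forbids. -/

namespace DTree0.ThreadTo

variable {n m : ℕ} {D : DTree0 n} {rs : List Rule}

theorem add_count_del (h : ThreadTo D rs m) (hlam : Rule.lam ∉ rs) (happ : Rule.app ∉ rs) :
    m + rs.count Rule.del = n := by
  induction h with
  | assum => rfl
  | lam => simp at hlam
  | appL | appR => simp at happ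
  | del _ ih =>
    simp only [List.mem_cons, reduceCtorEq, false_or, List.count_cons_self] at hlam happ ⊢
    have := ih hlam happ
    omega
  | fix _ ih =>
    simp only [List.mem_cons, reduceCtorEq, false_or] at hlam happ
    simpa using ih hlam happ

theorem depth_eq_zero (h : ThreadTo D rs m) (hSC : D.SC) (hlam : Rule.lam ∉ rs)
    (happ : Rule.app ∉ rs) (hdel : Rule.del ∉ rs) : D.depth = 0 := by
  induction h with
  | assum => rfl
  | lam => simp at hlam
  | appL | appR => simp at happ
  | del => simp at hdel
  | fix _ ih =>
    simp only [List.mem_cons, reduceCtorEq, false_or] at hlam happ hdel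
    have := ih hSC.1 hlam happ hdel
    exact absurd hSC.2 (by omega)

end DTree0.ThreadTo

/-- For every instance of FIX (here: the given FIX node with
immediate subderivation `D`, inside a derivation satisfying the FIX
side-condition everywhere) and every thread from that instance upwards to a
marked assumption leaf carrying the same prefix length `n` as its conclusion,
the thread passes through at least one instance of λ or @. -/
theorem stmt0 {n : ℕ} (D : DTree0 n) (hSC : (DTree0.fix n D).SC)
    (rs : List Rule) (h : DTree0.ThreadTo D rs n) :
    Rule.lam ∈ rs ∨ Rule.app ∈ rs := by
  by_contra! ⟨hlam, happ⟩
  have hdel : Rule.del ∉ rs := by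
    have := h.add_count_del hlam happ
    exact List.count_eq_zero.mp (by omega)
  have := h.depth_eq_zero hSC.1 hlam happ hdel
  exact absurd hSC.2 (by omega)
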